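/- arXiv:1512.02271 — 5 statements merged into one kernel-verified Lean document; each statement's English description precedes it below -/
import Mathlib

section
/- Let A : ℝ → Matrix (Fin 2) (Fin 2) ℝ, let λ̃ : ℝ → ℝ and θ : ℝ → ℝ be differentiable with λ̃(t) ≠ 0 for all t, and define λ : ℝ → ℝ² by λ(t) = −λ̃(t)·(cos θ(t), sin θ(t)). If λ satisfies the costate equation λ'(t) = −A(t)ᵀ λ(t) for all t, then θ satisfies θ'(t) = −⟨(−sin θ(t), cos θ(t)), A(t)ᵀ (cos θ(t), sin θ(t))⟩ for all t. -/
open Matrix Real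

theorem dotProduct_neg_sin_cos_cos_sin (x : ℝ) :
    ![-sin x, cos x] ⬝ᵥ ![cos x, sin x] = 0 := by
  simp only [dotProduct, Fin.sum_univ_two, cons_val_zero, cons_val_one]
  ring

theorem dotProduct_neg_sin_cos_self (x : ℝ) :
    ![-sin x, cos x] ⬝ᵥ ![-sin x, cos x] = 1 := by
  simp only [dotProduct, Fin.sum_univ_two, cons_val_zero, cons_val_one]
  linear_combination sin_sq_add_cos_sq x

theorem hasDerivAt_smul_cos_sin {r θ : ℝ → ℝ} {r' θ' t : ℝ} (hr : HasDerivAt r r' t)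
    (hθ : HasDerivAt θ θ' t) :
    HasDerivAt (fun s => r s • ![cos (θ s), sin (θ s)])
      (r' • ![cos (θ t), sin (θ t)] + (r t * θ') • ![-sin (θ t), cos (θ t)]) t := by
  refine hasDerivAt_pi.2 (Fin.forall_fin_two.2 ⟨?_, ?_⟩)
  · simp only [Pi.add_apply, Pi.smul_apply, smul_eq_mul, cons_val_zero]
    exact (hr.mul hθ.cos).congr_deriv (by ring)
  · simp only [Pi.add_apply, Pi.smul_apply, smul_eq_mul, cons_val_one, cons_val_zero]
    exact (hr.mul hθ.sin).congr_deriv (by ring)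

/-- If the costate `λ(t) = −λ̃(t)·(cos θ(t), sin θ(t))` (with `λ̃(t) ≠ 0`,
`λ̃` and `θ` differentiable) satisfies the costate equation `λ' = −A(t)ᵀ λ`, then the
control angle satisfies `θ' = −⟨(−sin θ, cos θ), A(t)ᵀ (cos θ, sin θ)⟩`. -/
theorem stmt6 (A : ℝ → Matrix (Fin 2) (Fin 2) ℝ) (lam θ : ℝ → ℝ)
    (hlam : Differentiable ℝ lam) (hθ : Differentiable ℝ θ)
    (hne : ∀ t, lam t ≠ 0)
    (l : ℝ → (Fin 2 → ℝ))
    (hl : ∀ t, l t = -(lam t) • ![Real.cos (θ t), Real.sin (θ t)])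
    (hode : ∀ t, deriv l t = -(Matrix.mulVec (A t)ᵀ (l t))) :
    ∀ t, deriv θ t =
      -(dotProduct ![-(Real.sin (θ t)), Real.cos (θ t)]
        (Matrix.mulVec (A t)ᵀ ![Real.cos (θ t), Real.sin (θ t)])) := by
  intro t
  set e := ![cos (θ t), sin (θ t)]
  set n := ![-sin (θ t), cos (θ t)]
  have hderiv : deriv l t = -deriv lam t • e + (-lam t * deriv θ t) • n := by
    rw [funext hl]
    exact (hasDerivAt_smul_cos_sin (hlam t).hasDerivAt.neg (hθ t).hasDerivAt).deriv
  -- Pairing with the normal `n` kills the `λ̃'` term: `-λ̃ θ' = λ̃ ⟨n, Aᵀ e⟩`.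
  have hnormal := congrArg (n ⬝ᵥ ·) (hode t)
  simp only [hderiv, hl t, dotProduct_add, dotProduct_smul, dotProduct_neg,
    mulVec_smul, n, e, dotProduct_neg_sin_cos_cos_sin, dotProduct_neg_sin_cos_self,
    smul_eq_mul] at hnormal
  apply mul_left_cancel₀ (hne t)
  linear_combination -hnormal
end

section
/- Let A : ℝ → Matrix (Fin 2) (Fin 2) ℝ, let λ̃ : ℝ → ℝ and θ : ℝ → ℝ be differentiable, and define λ : ℝ → ℝ² by λ(t) = −λ̃(t)·(cos θ(t), sin θ(t)). If λ satisfies λ'(t) = −A(t)ᵀ λ(t) for all t, then the amplitude satisfies λ̃'(t) = −λ̃(t)·⟨(cos θ(t), sin θ(t)), A(t)ᵀ (cos θ(t), sin θ(t))⟩ for all t. -/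
/-!
Along a unit vector field `u` the amplitude of `l = c • u` is `c = u ⬝ᵥ l`; differentiating,
the term `u' ⬝ᵥ l = c (u' ⬝ᵥ u)` vanishes because `u ⬝ᵥ u ≡ 1`, so `c' = u ⬝ᵥ l'`. With
`c = -λ̃`, `u = (cos θ, sin θ)` and `l' = -Aᵀ l = λ̃ Aᵀ u` this is the claimed equation.
-/

open Matrix

section

variable {𝕜 ι : Type*} [NontriviallyNormedField 𝕜] [Fintype ι]
  {u v : 𝕜 → ι → 𝕜} {u' v' : ι → 𝕜} {t : 𝕜}

theorem HasDerivAt.dotProduct (hu : HasDerivAt u u' t) (hv : HasDerivAt v v' t) :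
    HasDerivAt (fun s => u s ⬝ᵥ v s) (u' ⬝ᵥ v t + u t ⬝ᵥ v') t := by
  have hterm (i : ι) : HasDerivAt (fun s => u s i * v s i) (u' i * v t i + u t i * v' i) t :=
    (hasDerivAt_pi.1 hu i).mul (hasDerivAt_pi.1 hv i)
  simpa only [_root_.dotProduct, ← Finset.sum_add_distrib] using
    HasDerivAt.fun_sum (u := Finset.univ) fun i _ => hterm i

theorem dotProduct_eq_zero_of_hasDerivAt_of_unit [CharZero 𝕜] (hunit : ∀ s, u s ⬝ᵥ u s = 1)
    (hu : HasDerivAt u u' t) : u t ⬝ᵥ u' = 0 := by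
  have hconst : HasDerivAt (fun s => u s ⬝ᵥ u s) 0 t := by
    simpa only [hunit] using hasDerivAt_const t (1 : 𝕜)
  have htwice : u' ⬝ᵥ u t + u t ⬝ᵥ u' = 0 := (hu.dotProduct hu).unique hconst
  rw [dotProduct_comm, ← two_mul] at htwice
  exact (mul_eq_zero.1 htwice).resolve_left two_ne_zero

theorem HasDerivAt.amplitude_of_unit [CharZero 𝕜] {c : 𝕜 → 𝕜} {l : 𝕜 → ι → 𝕜} {l' : ι → 𝕜}
    (hu : HasDerivAt u u' t) (hunit : ∀ s, u s ⬝ᵥ u s = 1)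
    (hl : ∀ s, l s = c s • u s) (hl' : HasDerivAt l l' t) : HasDerivAt c (u t ⬝ᵥ l') t := by
  have hc : c = fun s => u s ⬝ᵥ l s := by
    funext s
    rw [hl, dotProduct_smul, hunit, smul_eq_mul, mul_one]
  have horth : u' ⬝ᵥ l t = 0 := by
    rw [hl, dotProduct_smul, dotProduct_comm, dotProduct_eq_zero_of_hasDerivAt_of_unit hunit hu,
      smul_zero]
  simpa only [hc, horth, zero_add] using hu.dotProduct hl'

end

theorem hasDerivAt_cos_sin {θ : ℝ → ℝ} {θ' t : ℝ} (hθ : HasDerivAt θ θ' t) :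
    HasDerivAt (fun s => ![Real.cos (θ s), Real.sin (θ s)])
      (θ' • ![-Real.sin (θ t), Real.cos (θ t)]) t := by
  rw [hasDerivAt_pi]
  intro i
  fin_cases i
  · simpa [mul_comm] using hθ.cos
  · simpa [mul_comm] using hθ.sin

theorem cos_sin_dotProduct_self (x : ℝ) :
    ![Real.cos x, Real.sin x] ⬝ᵥ ![Real.cos x, Real.sin x] = 1 := by
  simp [dotProduct, Fin.sum_univ_two, ← sq, Real.cos_sq_add_sin_sq]

/-- If the costate `λ(t) = −λ̃(t)·(cos θ(t), sin θ(t))` (with `λ̃` and `θ`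
differentiable) satisfies the costate equation `λ' = −A(t)ᵀ λ`, then the amplitude
satisfies `λ̃' = −λ̃·⟨(cos θ, sin θ), A(t)ᵀ (cos θ, sin θ)⟩`. -/
theorem stmt7 (A : ℝ → Matrix (Fin 2) (Fin 2) ℝ) (lam θ : ℝ → ℝ)
    (hlam : Differentiable ℝ lam) (hθ : Differentiable ℝ θ)
    (l : ℝ → (Fin 2 → ℝ))
    (hl : ∀ t, l t = -(lam t) • ![Real.cos (θ t), Real.sin (θ t)])
    (hode : ∀ t, deriv l t = -(Matrix.mulVec (A t)ᵀ (l t))) :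
    ∀ t, deriv lam t =
      -(lam t) * dotProduct ![Real.cos (θ t), Real.sin (θ t)]
        (Matrix.mulVec (A t)ᵀ ![Real.cos (θ t), Real.sin (θ t)]) := by
  intro t
  set u : ℝ → Fin 2 → ℝ := fun s => ![Real.cos (θ s), Real.sin (θ s)]
  have hu : HasDerivAt u _ t := hasDerivAt_cos_sin (hθ t).hasDerivAt
  have hl' : HasDerivAt l (deriv l t) t := by
    rw [funext hl]
    exact ((hlam t).neg.smul hu.differentiableAt).hasDerivAt
  have hamp : HasDerivAt (fun s => -lam s) (u t ⬝ᵥ deriv l t) t :=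
    hu.amplitude_of_unit (fun s => cos_sin_dotProduct_self (θ s)) hl hl'
  have hderiv : deriv lam t = -(u t ⬝ᵥ deriv l t) := by
    rw [← neg_neg (deriv lam t), ← deriv.fun_neg, hamp.deriv]
  rw [hderiv, hode, hl, mulVec_smul, dotProduct_neg, dotProduct_smul, smul_eq_mul, neg_neg]
end

section
/- Let v : ℝ² → ℝ² be continuously differentiable with derivative Dv, let u_max > 0, let θ : ℝ → ℝ be differentiable, and let z : ℝ → ℝ² be differentiable with ż(t) = v(z(t)) + u_max·(cos θ(t), sin θ(t)) for all t. Suppose θ'(t) = −⟨(−sin θ(t), cos θ(t)), Dv(z(t))ᵀ (cos θ(t), sin θ(t))⟩ for all t. Then z is twice differentiable and satisfies z̈(t) = Dv(z(t))·ż(t) − (1/u_max²)·⟨J(ż(t) − v(z(t))), Dv(z(t))ᵀ(ż(t) − v(z(t)))⟩ · J(ż(t) − v(z(t))) for all t, where J is the rotation matrix with rows (0, −1) and (1, 0). -/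
/-!
Write `w = (cos θ, sin θ)`, so that `ż − v(z) = u_max w` and `J w = (−sin θ, cos θ)`.
Differentiating `ż = v(z) + u_max w` gives `z̈ = Dv(z) ż + u_max θ' J w`, and the angle equation
says `θ' = −⟨J w, Dv(z)ᵀ w⟩`; the factor `1/u_max²` exactly cancels the homogeneity of
`ξ ↦ ⟨J ξ, Dv(z)ᵀ ξ⟩ J ξ` at `ξ = u_max w`.
-/

open Matrix

def Jrot : Matrix (Fin 2) (Fin 2) ℝ := !![0, -1; 1, 0]

theorem Jrot_mulVec_vecCons (x y : ℝ) : Jrot *ᵥ ![x, y] = ![-y, x] := by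
  ext i; fin_cases i <;> simp [Jrot]

theorem HasDerivAt.vecCons_cos_sin {θ : ℝ → ℝ} {θ' t : ℝ} (h : HasDerivAt θ θ' t) :
    HasDerivAt (fun s => ![Real.cos (θ s), Real.sin (θ s)])
      (θ' • ![-Real.sin (θ t), Real.cos (θ t)]) t := by
  rw [hasDerivAt_pi]
  intro i
  fin_cases i
  · simpa [mul_comm] using h.cos
  · simpa [mul_comm] using h.sin

theorem one_div_sq_mul_dotProduct_mulVec_smul_smul_mulVec_smul {n : Type*} [Fintype n]
    (J A : Matrix n n ℝ) (w : n → ℝ) {u : ℝ} (hu : u ≠ 0) :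
    (1 / u ^ 2 * ((J *ᵥ (u • w)) ⬝ᵥ (A *ᵥ (u • w)))) • J *ᵥ (u • w)
      = (u * ((J *ᵥ w) ⬝ᵥ (A *ᵥ w))) • J *ᵥ w := by
  simp only [mulVec_smul, dotProduct_smul, smul_dotProduct, smul_eq_mul, smul_smul]
  congr 1
  field_simp

theorem hasDerivAt_deriv_of_deriv_eq_comp_add {n : Type*} [Fintype n] {v : (n → ℝ) → n → ℝ}
    {A : Matrix n n ℝ} {z w : ℝ → n → ℝ} {w' : n → ℝ} {t : ℝ}
    (hv : HasFDerivAt v (LinearMap.toContinuousLinearMap (Matrix.mulVecLin A)) (z t))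
    (hz : DifferentiableAt ℝ z t) (hzw : ∀ s, deriv z s = v (z s) + w s)
    (hw : HasDerivAt w w' t) :
    HasDerivAt (deriv z) (A *ᵥ deriv z t + w') t := by
  have hvz : HasDerivAt (fun s => v (z s)) (A *ᵥ deriv z t) t :=
    hv.comp_hasDerivAt t hz.hasDerivAt
  exact (hvz.add hw).congr_of_eventuallyEq (Filter.Eventually.of_forall hzw)

theorem stmt8_general (v : (Fin 2 → ℝ) → (Fin 2 → ℝ)) (Dv : (Fin 2 → ℝ) → Matrix (Fin 2) (Fin 2) ℝ)
    (hDv : ∀ x, HasFDerivAt v (LinearMap.toContinuousLinearMap (Matrix.mulVecLin (Dv x))) x)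
    (umax : ℝ) (humax : 0 < umax)
    (θ : ℝ → ℝ) (hθ : Differentiable ℝ θ)
    (z : ℝ → (Fin 2 → ℝ)) (hz : Differentiable ℝ z)
    (hzode : ∀ t, deriv z t = v (z t) + umax • ![Real.cos (θ t), Real.sin (θ t)])
    (hθode : ∀ t, deriv θ t =
      -(dotProduct ![-(Real.sin (θ t)), Real.cos (θ t)]
        (Matrix.mulVec (Dv (z t))ᵀ ![Real.cos (θ t), Real.sin (θ t)]))) :
    Differentiable ℝ (deriv z) ∧
    ∀ t, deriv (deriv z) t =
      Matrix.mulVec (Dv (z t)) (deriv z t) -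
        ((1 / umax ^ 2) *
          dotProduct (Matrix.mulVec Jrot (deriv z t - v (z t)))
            (Matrix.mulVec (Dv (z t))ᵀ (deriv z t - v (z t)))) •
          Matrix.mulVec Jrot (deriv z t - v (z t)) := by
  have hzz : ∀ t, HasDerivAt (deriv z)
      (Dv (z t) *ᵥ deriv z t + umax • deriv θ t • ![-Real.sin (θ t), Real.cos (θ t)]) t :=
    fun t => hasDerivAt_deriv_of_deriv_eq_comp_add (hDv (z t)) (hz t) hzode
      ((hθ t).hasDerivAt.vecCons_cos_sin.const_smul umax)
  refine ⟨fun t => (hzz t).differentiableAt, fun t => ?_⟩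
  have hcontrol : deriv z t - v (z t) = umax • ![Real.cos (θ t), Real.sin (θ t)] := by
    rw [hzode t, add_sub_cancel_left]
  rw [(hzz t).deriv, hcontrol,
    one_div_sq_mul_dotProduct_mulVec_smul_smul_mulVec_smul _ _ _ humax.ne', Jrot_mulVec_vecCons,
    hθode t, smul_smul, mul_neg, neg_smul, sub_eq_add_neg]

/-- For a C¹ velocity field `v` with Jacobian `Dv`, a glider path `z` with
`ż = v(z) + u_max·(cos θ, sin θ)` whose control angle satisfies
`θ' = −⟨(−sin θ, cos θ), Dv(z)ᵀ(cos θ, sin θ)⟩`, the path is twice differentiable and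
satisfies the second-order equation
`z̈ = Dv(z)·ż − (1/u_max²)·⟨J(ż − v(z)), Dv(z)ᵀ(ż − v(z))⟩·J(ż − v(z))`. -/
theorem stmt8 (v : (Fin 2 → ℝ) → (Fin 2 → ℝ)) (Dv : (Fin 2 → ℝ) → Matrix (Fin 2) (Fin 2) ℝ)
    (hv : ContDiff ℝ 1 v)
    (hDv : ∀ x, HasFDerivAt v (LinearMap.toContinuousLinearMap (Matrix.mulVecLin (Dv x))) x)
    (umax : ℝ) (humax : 0 < umax)
    (θ : ℝ → ℝ) (hθ : Differentiable ℝ θ)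
    (z : ℝ → (Fin 2 → ℝ)) (hz : Differentiable ℝ z)
    (hzode : ∀ t, deriv z t = v (z t) + umax • ![Real.cos (θ t), Real.sin (θ t)])
    (hθode : ∀ t, deriv θ t =
      -(dotProduct ![-(Real.sin (θ t)), Real.cos (θ t)]
        (Matrix.mulVec (Dv (z t))ᵀ ![Real.cos (θ t), Real.sin (θ t)]))) :
    Differentiable ℝ (deriv z) ∧
    ∀ t, deriv (deriv z) t =
      Matrix.mulVec (Dv (z t)) (deriv z t) -
        ((1 / umax ^ 2) *
          dotProduct (Matrix.mulVec Jrot (deriv z t - v (z t)))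
            (Matrix.mulVec (Dv (z t))ᵀ (deriv z t - v (z t)))) •
          Matrix.mulVec Jrot (deriv z t - v (z t)) :=
  stmt8_general v Dv hDv umax humax θ hθ z hz hzode hθode
end

section
/- Let n, m be finite index types, H a real m × n matrix, P a positive semidefinite real n × n matrix, and R a positive definite real m × m matrix. Then the matrix P − P·Hᵀ·(H·P·Hᵀ + R)⁻¹·H·P is positive semidefinite. -/
open Matrix

/-- For a real `m × n` matrix `H`, a positive semidefinite `n × n` matrix `P`
and a positive definite `m × m` matrix `R`, the Kalman posterior covariance
`P − P·Hᵀ·(H·P·Hᵀ + R)⁻¹·H·P` is positive semidefinite. -/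
theorem stmt10 {n m : Type*} [Fintype n] [Fintype m] [DecidableEq m]
    (H : Matrix m n ℝ) (P : Matrix n n ℝ) (R : Matrix m m ℝ)
    (hP : P.PosSemidef) (hR : R.PosDef) :
    (P - P * Hᵀ * (H * P * Hᵀ + R)⁻¹ * H * P).PosSemidef := by
  classical
  set S : Matrix m m ℝ := H * P * Hᵀ + R with hSdef
  have hS : S.PosDef := by
    have hHPHt : (H * P * Hᵀ).PosSemidef := by
      simpa using hP.mul_mul_conjTranspose_same H
    exact Matrix.PosDef.posSemidef_add hHPHt hR
  have hSunit : IsUnit S.det := isUnit_iff_isUnit_det _ |>.1 hS.isUnit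
  have hSinv_symm : (S⁻¹)ᵀ = S⁻¹ := by
    rw [transpose_nonsing_inv]
    congr 1
    simpa using hS.isHermitian.eq
  have hPsymm : Pᵀ = P := by simpa using hP.isHermitian.eq
  set K : Matrix n m ℝ := P * Hᵀ * S⁻¹ with hKdef
  have hKt : Kᵀ = S⁻¹ * H * P := by
    rw [hKdef, transpose_mul, transpose_mul, hSinv_symm, hPsymm, transpose_transpose, Matrix.mul_assoc]
  have hKSKt : K * S * Kᵀ = P * Hᵀ * S⁻¹ * H * P := by
    rw [hKt, hKdef]
    have : P * Hᵀ * S⁻¹ * S * (S⁻¹ * H * P)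
        = P * Hᵀ * (S⁻¹ * S) * (S⁻¹ * (H * P)) := by
      simp only [Matrix.mul_assoc]
    rw [this, Matrix.nonsing_inv_mul S hSunit, Matrix.mul_one]
    have : P * Hᵀ * (S⁻¹ * (H * P)) = P * Hᵀ * S⁻¹ * (H * P) := by
      simp only [Matrix.mul_assoc]
    rw [this, Matrix.mul_assoc (P * Hᵀ * S⁻¹) H P]
  have key : P - P * Hᵀ * S⁻¹ * H * P
      = (1 - K * H) * P * (1 - K * H)ᵀ + K * R * Kᵀ := by
    have hexp : (1 - K * H) * P * (1 - K * H)ᵀ + K * R * Kᵀ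
        = P - K * H * P - P * Hᵀ * Kᵀ + (K * (H * P * Hᵀ) * Kᵀ + K * R * Kᵀ) := by
      simp only [transpose_sub, transpose_one, transpose_mul, Matrix.sub_mul,
        Matrix.mul_sub, Matrix.one_mul, Matrix.mul_one, Matrix.mul_assoc]
      abel
    have hsum : K * (H * P * Hᵀ) * Kᵀ + K * R * Kᵀ = K * S * Kᵀ := by
      rw [hSdef, Matrix.mul_add, Matrix.add_mul]
    rw [hexp, hsum, hKSKt, hKt]
    have hKHP : K * H * P = P * Hᵀ * S⁻¹ * H * P := by
      rw [hKdef]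
    have h2 : P * Hᵀ * (S⁻¹ * H * P) = P * Hᵀ * S⁻¹ * H * P := by
      simp only [Matrix.mul_assoc]
    rw [hKHP, h2]
    abel
  rw [key]
  have h1 : ((1 - K * H) * P * (1 - K * H)ᵀ).PosSemidef := by
    have := hP.mul_mul_conjTranspose_same (1 - K * H)
    rwa [conjTranspose_eq_transpose_of_trivial] at this
  have h2 : (K * R * Kᵀ).PosSemidef := by
    have := hR.posSemidef.mul_mul_conjTranspose_same K
    rwa [conjTranspose_eq_transpose_of_trivial] at this
  exact h1.add h2
end

section
/- Let n, m be finite index types, H a real m × n matrix, P a positive semidefinite real n × n matrix, and R a positive definite real m × m matrix. Then trace(P − P·Hᵀ·(H·P·Hᵀ + R)⁻¹·H·P) ≤ trace(P). -/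
open Matrix

/-!
The Kalman correction `P Hᵀ S⁻¹ H P`, with innovation covariance `S = H P Hᵀ + R`, is the
congruence `(H P)ᵀ S⁻¹ (H P)` of the positive semidefinite matrix `S⁻¹`, hence itself positive
semidefinite, so its trace is nonnegative.
-/

namespace Matrix.PosSemidef

variable {n m 𝕜 : Type*} [Fintype n] [Fintype m] [DecidableEq m]
  [CommRing 𝕜] [PartialOrder 𝕜] [StarRing 𝕜] [StarOrderedRing 𝕜]

lemma kalman_correction {P : Matrix n n 𝕜} (hP : P.PosSemidef) (H : Matrix m n 𝕜)
    {R : Matrix m m 𝕜} (hR : R.PosSemidef) :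
    (P * Hᴴ * (H * P * Hᴴ + R)⁻¹ * H * P).PosSemidef := by
  have hS : (H * P * Hᴴ + R).PosSemidef := (hP.mul_mul_conjTranspose_same H).add hR
  have hPH : (H * P)ᴴ = P * Hᴴ := by rw [conjTranspose_mul, hP.isHermitian.eq]
  simpa only [hPH, Matrix.mul_assoc] using hS.inv.conjTranspose_mul_mul_same (H * P)

end Matrix.PosSemidef

/-- For a real `m × n` matrix `H`, a positive semidefinite `n × n` matrix `P`
and a positive definite `m × m` matrix `R`, the Kalman update does not increase the
covariance trace: `trace(P − P·Hᵀ·(H·P·Hᵀ + R)⁻¹·H·P) ≤ trace(P)`. -/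
theorem stmt11 {n m : Type*} [Fintype n] [Fintype m] [DecidableEq m]
    (H : Matrix m n ℝ) (P : Matrix n n ℝ) (R : Matrix m m ℝ)
    (hP : P.PosSemidef) (hR : R.PosDef) :
    (P - P * Hᵀ * (H * P * Hᵀ + R)⁻¹ * H * P).trace ≤ P.trace := by
  have hK := (hP.kalman_correction H hR.posSemidef).trace_nonneg
  rw [conjTranspose_eq_transpose_of_trivial] at hK
  rw [trace_sub]
  linarith
end
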